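/- arXiv:1902.08878 — 7 statements merged into one kernel-verified Lean document; each statement's English description precedes it below -/
import Mathlib

section
/- Let T ≥ 0 be a real number, let R_d be a 3×3 real orthogonal matrix, let a = (a_x, a_y, a_z) ∈ ℝ³ be a unit vector, and let ζ ∈ ℝ. Let R(a, ζ) := I₃ + sin ζ · A + (1 − cos ζ) · A² be the Rodrigues rotation matrix about axis a through angle ζ, where A is the 3×3 skew-symmetric cross-product matrix of a. Then the Euclidean norm satisfies ‖T · R_d · (R(a, ζ)ᵀ − I₃) · ẑ‖ ≤ √6 · T · |ζ|, where ẑ := (0, 0, 1). -/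
/-
The displacement `w = (R(a, ζ)ᵀ - I₃) ẑ` has squared length
`(a_x² + a_y²) (sin² ζ + (1 - cos ζ)²) = (1 - a_z²) · 2 (1 - cos ζ) ≤ ζ²`,
using `cos ζ ≥ 1 - ζ² / 2`. Multiplying by the orthogonal `R_d` preserves the length, so
`‖δ‖ = T ‖w‖ ≤ T |ζ| ≤ √6 T |ζ|`.
-/

open Matrix

/-- Euclidean norm on `ℝ³` (as `Fin 3 → ℝ`). -/
noncomputable def norm3 (v : Fin 3 → ℝ) : ℝ := Real.sqrt (∑ i, v i ^ 2)

/-- The skew-symmetric cross-product matrix of `a`, satisfying `A *ᵥ v = a ×₃ v`. -/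
def skewMat (a : Fin 3 → ℝ) : Matrix (Fin 3) (Fin 3) ℝ :=
  !![0, -a 2, a 1; a 2, 0, -a 0; -a 1, a 0, 0]

/-- The Rodrigues rotation matrix about the axis `a` through the angle `ζ`. -/
noncomputable def rodrigues (a : Fin 3 → ℝ) (ζ : ℝ) : Matrix (Fin 3) (Fin 3) ℝ :=
  1 + Real.sin ζ • skewMat a + (1 - Real.cos ζ) • (skewMat a * skewMat a)

lemma norm3_eq_sqrt_dotProduct (v : Fin 3 → ℝ) : norm3 v = √(v ⬝ᵥ v) := by
  simp only [norm3, dotProduct, sq]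

lemma norm3_smul (c : ℝ) (v : Fin 3 → ℝ) : norm3 (c • v) = |c| * norm3 v := by
  rw [norm3_eq_sqrt_dotProduct, norm3_eq_sqrt_dotProduct, smul_dotProduct, dotProduct_smul,
    smul_smul, smul_eq_mul, Real.sqrt_mul (mul_self_nonneg c), Real.sqrt_mul_self_eq_abs]

lemma dotProduct_mulVec_self_of_transpose_mul_self {n : Type*} [Fintype n] [DecidableEq n]
    {R : Matrix n n ℝ} (hR : Rᵀ * R = 1) (v : n → ℝ) :
    (R *ᵥ v) ⬝ᵥ (R *ᵥ v) = v ⬝ᵥ v := by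
  rw [dotProduct_mulVec, vecMul_mulVec, hR, vecMul_one]

lemma norm3_mulVec_of_transpose_mul_self {R : Matrix (Fin 3) (Fin 3) ℝ} (hR : Rᵀ * R = 1)
    (v : Fin 3 → ℝ) : norm3 (R *ᵥ v) = norm3 v := by
  rw [norm3_eq_sqrt_dotProduct, norm3_eq_sqrt_dotProduct,
    dotProduct_mulVec_self_of_transpose_mul_self hR]

lemma rodrigues_transpose_sub_one_mulVec_ez (a : Fin 3 → ℝ) (ζ : ℝ) :
    ((rodrigues a ζ)ᵀ - 1) *ᵥ ![0, 0, 1] =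
      ![-Real.sin ζ * a 1 + (1 - Real.cos ζ) * (a 0 * a 2),
        Real.sin ζ * a 0 + (1 - Real.cos ζ) * (a 1 * a 2),
        -(1 - Real.cos ζ) * (a 0 ^ 2 + a 1 ^ 2)] := by
  ext i
  fin_cases i <;> simp [rodrigues, skewMat, mulVec, dotProduct, Fin.sum_univ_three]
  ring

lemma dotProduct_self_rodrigues_displacement {a : Fin 3 → ℝ} (ha : a ⬝ᵥ a = 1) (ζ : ℝ) :
    (((rodrigues a ζ)ᵀ - 1) *ᵥ ![0, 0, 1]) ⬝ᵥ (((rodrigues a ζ)ᵀ - 1) *ᵥ ![0, 0, 1]) =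
      (1 - a 2 ^ 2) * (2 * (1 - Real.cos ζ)) := by
  rw [rodrigues_transpose_sub_one_mulVec_ez]
  simp only [dotProduct, Fin.sum_univ_three, Matrix.cons_val] at ha ⊢
  linear_combination (a 0 ^ 2 + a 1 ^ 2) * Real.sin_sq_add_cos_sq ζ
    + ((a 0 ^ 2 + a 1 ^ 2) * (1 - Real.cos ζ) ^ 2 + 2 * (1 - Real.cos ζ)) * ha

lemma norm3_rodrigues_displacement_le {a : Fin 3 → ℝ} (ha : norm3 a = 1) (ζ : ℝ) :
    norm3 (((rodrigues a ζ)ᵀ - 1) *ᵥ ![0, 0, 1]) ≤ |ζ| := by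
  rw [norm3_eq_sqrt_dotProduct] at ha ⊢
  rw [Real.sqrt_le_left (abs_nonneg ζ),
    dotProduct_self_rodrigues_displacement (Real.sqrt_eq_one.mp ha)]
  have hcos : 2 * (1 - Real.cos ζ) ≤ ζ ^ 2 := by
    linarith [Real.one_sub_sq_div_two_le_cos (x := ζ)]
  calc (1 - a 2 ^ 2) * (2 * (1 - Real.cos ζ)) ≤ 1 * ζ ^ 2 := by
        gcongr
        · linarith [Real.cos_le_one ζ]
        · linarith [sq_nonneg (a 2)]
    _ = |ζ| ^ 2 := by rw [one_mul, sq_abs]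

/-- Lemma 2: the exogenous disturbance `δ = T R_d (R̃ᵀ - I₃) ẑ` is bounded by `√6 T |ζ̃|`. -/
theorem stmt0 (T : ℝ) (hT : 0 ≤ T) (Rd : Matrix (Fin 3) (Fin 3) ℝ)
    (hRd : Rdᵀ * Rd = 1) (a : Fin 3 → ℝ) (ha : norm3 a = 1) (ζ : ℝ) :
    norm3 (T • (Rd * ((rodrigues a ζ)ᵀ - 1)) *ᵥ ![0, 0, 1]) ≤ Real.sqrt 6 * T * |ζ| := by
  rw [← mulVec_mulVec, norm3_smul, norm3_mulVec_of_transpose_mul_self hRd, abs_of_nonneg hT]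
  have h6 : 1 ≤ Real.sqrt 6 := Real.one_le_sqrt.mpr (by norm_num)
  calc T * norm3 (((rodrigues a ζ)ᵀ - 1) *ᵥ ![0, 0, 1]) ≤ T * |ζ| := by
        gcongr
        exact norm3_rodrigues_displacement_le ha ζ
    _ ≤ Real.sqrt 6 * T * |ζ| := by
        rw [mul_assoc]
        exact le_mul_of_one_le_left (by positivity) h6
end

section
/- Let J be a 3×3 real symmetric positive definite matrix with largest eigenvalue λ_M, let K_d > 0, and let η be a real number with 0 < η < K_d / λ_M. Then the 6×6 block matrix M := [[4 η K_d I₃, 2 η J], [2 η J, J]] is symmetric positive definite. -/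
/-!
Take the Schur complement of the block `J`: it is
`4ηK_d I - (2ηJ) J⁻¹ (2ηJ) = 4η² ((K_d / η) I - J)`, which is positive definite because every
eigenvalue of `J` is at most `λ_M < K_d / η`.
-/

open Matrix

namespace Matrix

open scoped ComplexOrder

variable {𝕜 : Type*} [RCLike 𝕜] {m n : Type*} [Fintype m] [Fintype n] [DecidableEq m]
  [DecidableEq n]

open scoped MatrixOrder in
theorem IsHermitian.posDef_smul_one_sub {A : Matrix n n 𝕜} (hA : A.IsHermitian) {c : ℝ}
    (hc : ∀ i, hA.eigenvalues i < c) : (c • (1 : Matrix n n 𝕜) - A).PosDef := by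
  rw [← Algebra.algebraMap_eq_smul_one, ← isStrictlyPositive_iff_posDef,
    StarOrderedRing.isStrictlyPositive_iff_spectrum_pos (R := ℝ) _
      ((IsSelfAdjoint.algebraMap _ (.all c)).sub hA.isSelfAdjoint),
    ← spectrum.singleton_sub_eq, hA.spectrum_real_eq_range_eigenvalues]
  simpa using hc

theorem posDef_fromBlocks₂₂_iff (A : Matrix m m 𝕜) (B : Matrix m n 𝕜) {D : Matrix n n 𝕜}
    (hD : D.PosDef) : (fromBlocks A B Bᴴ D).PosDef ↔ (A - B * D⁻¹ * Bᴴ).PosDef := by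
  have := hD.isUnit.invertible
  have hdet : (fromBlocks A B Bᴴ D).det = D.det * (A - B * D⁻¹ * Bᴴ).det := by
    rw [det_fromBlocks₂₂, invOf_eq_nonsing_inv]
  have hpsd := PosDef.fromBlocks₂₂ A B hD
  constructor
  · intro hM
    rw [(hpsd.1 hM.posSemidef).posDef_iff_isUnit, isUnit_iff_isUnit_det]
    have hdetM := (isUnit_iff_isUnit_det _).1 hM.isUnit
    rw [hdet] at hdetM
    exact isUnit_of_mul_isUnit_right hdetM
  · intro hS
    rw [(hpsd.2 hS.posSemidef).posDef_iff_isUnit, isUnit_iff_isUnit_det, hdet]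
    exact (isUnit_iff_isUnit_det _).1 hD.isUnit |>.mul ((isUnit_iff_isUnit_det _).1 hS.isUnit)

end Matrix

theorem stmt2_general (J : Matrix (Fin 3) (Fin 3) ℝ) (hJ : J.PosDef) (lamM : ℝ)
    (hmax : (∀ i, hJ.1.eigenvalues i ≤ lamM) ∧ ∃ i, hJ.1.eigenvalues i = lamM)
    (Kd η : ℝ) (hη0 : 0 < η) (hη : η < Kd / lamM) :
    (Matrix.fromBlocks ((4 * η * Kd) • (1 : Matrix (Fin 3) (Fin 3) ℝ)) ((2 * η) • J)
        ((2 * η) • J) J).IsSymm ∧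
      (Matrix.fromBlocks ((4 * η * Kd) • (1 : Matrix (Fin 3) (Fin 3) ℝ)) ((2 * η) • J)
        ((2 * η) • J) J).PosDef := by
  have hlamM : 0 < lamM := (hJ.eigenvalues_pos 0).trans_le (hmax.1 0)
  have hev : ∀ i, hJ.1.eigenvalues i < Kd / η := fun i =>
    (hmax.1 i).trans_lt (by rwa [lt_div_iff₀ hη0, mul_comm, ← lt_div_iff₀ hlamM])
  have hB : ((2 * η) • J)ᴴ = (2 * η) • J := by rw [conjTranspose_smul, hJ.1.eq, star_trivial]
  have hschur : (4 * η * Kd) • (1 : Matrix (Fin 3) (Fin 3) ℝ) - (2 * η) • J * J⁻¹ * ((2 * η) • J)ᴴ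
      = (4 * η ^ 2) • ((Kd / η) • (1 : Matrix (Fin 3) (Fin 3) ℝ) - J) := by
    rw [hB, smul_mul, mul_nonsing_inv _ hJ.det_pos.ne'.isUnit, smul_mul, one_mul, smul_smul,
      smul_sub, smul_smul]
    congr 2
    field_simp
    ring
  have hM := (posDef_fromBlocks₂₂_iff _ ((2 * η) • J) hJ).2
    (hschur ▸ (hJ.1.posDef_smul_one_sub hev).smul (by positivity))
  rw [hB] at hM
  exact ⟨isHermitian_iff_isSymm.1 hM.1, hM⟩

/-- Positive definiteness (and symmetry) of the 6×6 block matrix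
`M = [[4ηK_d I₃, 2ηJ], [2ηJ, J]]` from the Lyapunov function of Proposition 1. -/
theorem stmt2 (J : Matrix (Fin 3) (Fin 3) ℝ) (hJ : J.PosDef) (lamM : ℝ)
    (hmax : (∀ i, hJ.1.eigenvalues i ≤ lamM) ∧ ∃ i, hJ.1.eigenvalues i = lamM)
    (Kd η : ℝ) (hKd : 0 < Kd) (hη0 : 0 < η) (hη : η < Kd / lamM) :
    (Matrix.fromBlocks ((4 * η * Kd) • (1 : Matrix (Fin 3) (Fin 3) ℝ)) ((2 * η) • J)
        ((2 * η) • J) J).IsSymm ∧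
      (Matrix.fromBlocks ((4 * η * Kd) • (1 : Matrix (Fin 3) (Fin 3) ℝ)) ((2 * η) • J)
        ((2 * η) • J) J).PosDef :=
  stmt2_general J hJ lamM hmax Kd η hη0 hη
end

section
/- Let J be a 3×3 real symmetric positive definite matrix with largest eigenvalue λ_M, let K_p, K_d > 0, and let η satisfy 0 < η < K_d / λ_M. For a unit quaternion q = (q₀, q_v) with q₀ ∈ ℝ, q_v ∈ ℝ³, q₀² + ‖q_v‖² = 1, and for ω ∈ ℝ³, define V(q₀, q_v, ω) := 2 K_p (1 − q₀) + ½ (4 η K_d ‖q_v‖² + 4 η ⟨q_v, J ω⟩ + ⟨ω, J ω⟩). Then V(q₀, q_v, ω) ≥ 0, and V(q₀, q_v, ω) = 0 if and only if q₀ = 1 and ω = 0 (in which case necessarily q_v = 0). -/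
/-!
Completing the square with `u = ω + 2η q_v` gives
`V = 2K_p(1 - q₀) + ½⟨u, Ju⟩ + 2η(K_d‖q_v‖² - η⟨q_v, Jq_v⟩)`.
The first term is nonnegative because `q₀ ≤ 1` on the unit sphere, the second because `J > 0`,
and the third because `⟨q_v, Jq_v⟩ ≤ λ_M‖q_v‖²` and `ηλ_M < K_d`. If `V = 0`, the first term
forces `q₀ = 1`, hence `q_v = 0`, and then `⟨ω, Jω⟩ = 0` forces `ω = 0`.
-/

open Matrix

/-- Euclidean inner product on `ℝ³` (as `Fin 3 → ℝ`). -/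
def inner3 (v w : Fin 3 → ℝ) : ℝ := ∑ i, v i * w i

/-- The Lyapunov function candidate
`V(q₀, q_v, ω) = 2K_p(1 - q₀) + ½(4ηK_d‖q_v‖² + 4η⟨q_v, Jω⟩ + ⟨ω, Jω⟩)`. -/
noncomputable def lyapV (J : Matrix (Fin 3) (Fin 3) ℝ) (Kp Kd η q₀ : ℝ)
    (qv ω : Fin 3 → ℝ) : ℝ :=
  2 * Kp * (1 - q₀) +
    (1 / 2) * (4 * η * Kd * inner3 qv qv + 4 * η * inner3 qv (J *ᵥ ω) + inner3 ω (J *ᵥ ω))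

section EigenvalueBound

open scoped MatrixOrder ComplexOrder

variable {𝕜 n : Type*} [RCLike 𝕜] [Fintype n] [DecidableEq n] {A : Matrix n n 𝕜}

theorem Matrix.IsHermitian.le_algebraMap_of_eigenvalues_le (hA : A.IsHermitian) {c : ℝ}
    (hc : ∀ i, hA.eigenvalues i ≤ c) : A ≤ algebraMap ℝ (Matrix n n 𝕜) c := by
  refine le_algebraMap_of_spectrum_le fun x hx => ?_
  obtain ⟨i, rfl⟩ := hA.spectrum_real_eq_range_eigenvalues ▸ hx
  exact hc i

theorem Matrix.IsHermitian.dotProduct_mulVec_le_of_eigenvalues_le (hA : A.IsHermitian) {c : ℝ}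
    (hc : ∀ i, hA.eigenvalues i ≤ c) (x : n → 𝕜) :
    star x ⬝ᵥ A *ᵥ x ≤ c * (star x ⬝ᵥ x) := by
  have := (Matrix.le_iff.mp (hA.le_algebraMap_of_eigenvalues_le hc)).dotProduct_mulVec_nonneg x
  rwa [sub_mulVec, dotProduct_sub, sub_nonneg, Algebra.algebraMap_eq_smul_one, smul_mulVec,
    one_mulVec, dotProduct_smul, RCLike.real_smul_eq_coe_mul] at this

end EigenvalueBound

section QuadraticForm

variable {R n : Type*} [CommRing R] [Fintype n] {A : Matrix n n R}

theorem Matrix.IsSymm.dotProduct_mulVec_comm (hA : A.IsSymm) (v w : n → R) :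
    v ⬝ᵥ A *ᵥ w = w ⬝ᵥ A *ᵥ v := by
  rw [dotProduct_mulVec, ← mulVec_transpose, hA.eq, dotProduct_comm]

theorem Matrix.IsSymm.add_dotProduct_mulVec_add (hA : A.IsSymm) (v w : n → R) :
    (v + w) ⬝ᵥ A *ᵥ (v + w) = v ⬝ᵥ A *ᵥ v + 2 * (w ⬝ᵥ A *ᵥ v) + w ⬝ᵥ A *ᵥ w := by
  rw [mulVec_add, dotProduct_add, add_dotProduct, add_dotProduct, hA.dotProduct_mulVec_comm v w]
  ring

end QuadraticForm

theorem Matrix.IsHermitian.mul_dotProduct_mulVec_le {n : Type*} [Fintype n] [DecidableEq n]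
    {J : Matrix n n ℝ} (hJ : J.IsHermitian) {c k η : ℝ} (hc : ∀ i, hJ.eigenvalues i ≤ c)
    (hη : 0 ≤ η) (hηc : η * c ≤ k) (q : n → ℝ) : η * (q ⬝ᵥ J *ᵥ q) ≤ k * (q ⬝ᵥ q) := by
  have hJq : q ⬝ᵥ J *ᵥ q ≤ c * (q ⬝ᵥ q) := by
    simpa using hJ.dotProduct_mulVec_le_of_eigenvalues_le hc q
  have hqq : 0 ≤ q ⬝ᵥ q := by simpa using dotProduct_star_self_nonneg q
  calc η * (q ⬝ᵥ J *ᵥ q) ≤ η * (c * (q ⬝ᵥ q)) := by gcongr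
    _ = η * c * (q ⬝ᵥ q) := by ring
    _ ≤ k * (q ⬝ᵥ q) := by gcongr

theorem inner3_eq_dotProduct (v w : Fin 3 → ℝ) : inner3 v w = v ⬝ᵥ w := rfl

theorem lyapV_eq_of_isSymm {J : Matrix (Fin 3) (Fin 3) ℝ} (hJ : J.IsSymm) (Kp Kd η q₀ : ℝ)
    (qv ω : Fin 3 → ℝ) :
    lyapV J Kp Kd η q₀ qv ω =
      2 * Kp * (1 - q₀) + (1 / 2) * ((ω + (2 * η) • qv) ⬝ᵥ J *ᵥ (ω + (2 * η) • qv)) +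
        2 * η * (Kd * (qv ⬝ᵥ qv) - η * (qv ⬝ᵥ J *ᵥ qv)) := by
  simp only [lyapV, inner3_eq_dotProduct, hJ.add_dotProduct_mulVec_add, mulVec_smul,
    dotProduct_smul, smul_dotProduct, smul_eq_mul]
  ring

theorem stmt3_general (J : Matrix (Fin 3) (Fin 3) ℝ) (hJ : J.PosDef) (lamM : ℝ)
    (hmax : (∀ i, hJ.1.eigenvalues i ≤ lamM) ∧ ∃ i, hJ.1.eigenvalues i = lamM)
    (Kp Kd η : ℝ) (hKp : 0 < Kp) (hη0 : 0 < η) (hη : η < Kd / lamM)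
    (q₀ : ℝ) (qv ω : Fin 3 → ℝ) (hunit : q₀ ^ 2 + inner3 qv qv = 1) :
    0 ≤ lyapV J Kp Kd η q₀ qv ω ∧
      (lyapV J Kp Kd η q₀ qv ω = 0 ↔ q₀ = 1 ∧ ω = 0) := by
  obtain ⟨hle, i₀, rfl⟩ := hmax
  rw [inner3_eq_dotProduct] at hunit
  have hqv : q₀ = 1 → qv = 0 := fun h ↦ dotProduct_self_eq_zero.mp (by rw [h] at hunit; linarith)
  have hqq : 0 ≤ qv ⬝ᵥ qv := by simpa using dotProduct_star_self_nonneg qv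
  have hq₀ : q₀ ≤ 1 := by nlinarith
  have h_att : 0 ≤ 2 * Kp * (1 - q₀) := mul_nonneg (by positivity) (sub_nonneg.mpr hq₀)
  have h_sq (u : Fin 3 → ℝ) : 0 ≤ u ⬝ᵥ J *ᵥ u := hJ.posSemidef.dotProduct_mulVec_nonneg u
  have h_res : 0 ≤ 2 * η * (Kd * (qv ⬝ᵥ qv) - η * (qv ⬝ᵥ J *ᵥ qv)) := by
    have hηc : η * hJ.1.eigenvalues i₀ ≤ Kd := ((lt_div_iff₀ (hJ.eigenvalues_pos i₀)).mp hη).le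
    exact mul_nonneg (by positivity)
      (sub_nonneg.mpr (hJ.1.mul_dotProduct_mulVec_le hle hη0.le hηc qv))
  rw [lyapV_eq_of_isSymm (isHermitian_iff_isSymm.mp hJ.1)]
  refine ⟨by linarith [h_sq (ω + (2 * η) • qv)], fun h0 ↦ ?_, ?_⟩
  · obtain rfl : q₀ = 1 := by nlinarith [h_sq (ω + (2 * η) • qv)]
    have hω : ω ⬝ᵥ J *ᵥ ω = 0 := by simpa [hqv rfl] using h0
    exact ⟨rfl, by_contra fun hω₀ ↦ (hJ.dotProduct_mulVec_pos hω₀).ne' (by simpa using hω)⟩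
  · rintro ⟨rfl, rfl⟩
    simp [hqv rfl]

/-- Positive definiteness of the Lyapunov function candidate of Proposition 1:
`V ≥ 0`, with `V = 0` iff `q₀ = 1` and `ω = 0`. -/
theorem stmt3 (J : Matrix (Fin 3) (Fin 3) ℝ) (hJ : J.PosDef) (lamM : ℝ)
    (hmax : (∀ i, hJ.1.eigenvalues i ≤ lamM) ∧ ∃ i, hJ.1.eigenvalues i = lamM)
    (Kp Kd η : ℝ) (hKp : 0 < Kp) (hKd : 0 < Kd) (hη0 : 0 < η) (hη : η < Kd / lamM)
    (q₀ : ℝ) (qv ω : Fin 3 → ℝ) (hunit : q₀ ^ 2 + inner3 qv qv = 1) :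
    0 ≤ lyapV J Kp Kd η q₀ qv ω ∧
      (lyapV J Kp Kd η q₀ qv ω = 0 ↔ q₀ = 1 ∧ ω = 0) :=
  stmt3_general J hJ lamM hmax Kp Kd η hKp hη0 hη q₀ qv ω hunit
end

section
/- Let Q be a 2×2 real symmetric matrix all of whose entries are strictly positive, and let b ∈ ℝ² be such that y := Q⁻¹ b has both components nonnegative. If x ∈ ℝ² has both components strictly greater than the corresponding components of y, then ⟨x, Q x⟩ > ⟨x, b⟩, i.e., −xᵀ Q x + xᵀ b < 0. -/
/-!
Write `y = Q⁻¹ b`, so that `b = Q y` and `⟨x, Qx⟩ - ⟨x, b⟩ = ⟨x, Q (x - y)⟩ = ∑ᵢⱼ xᵢ Qᵢⱼ (xⱼ - yⱼ)`.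
Every factor is positive: `Qᵢⱼ > 0` by hypothesis, `xⱼ - yⱼ > 0`, and `xᵢ > yᵢ ≥ 0`.
-/

open Matrix

theorem Matrix.dotProduct_mulVec_pos {n : Type*} [Fintype n] [Nonempty n]
    {Q : Matrix n n ℝ} {x z : n → ℝ} (hQ : ∀ i j, 0 < Q i j) (hx : ∀ i, 0 < x i)
    (hz : ∀ j, 0 < z j) : 0 < x ⬝ᵥ (Q *ᵥ z) :=
  Finset.sum_pos (fun i _ => mul_pos (hx i) <|
    Finset.sum_pos (fun j _ => mul_pos (hQ i j) (hz j)) Finset.univ_nonempty)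
    Finset.univ_nonempty

theorem Matrix.mulVec_nonsing_inv_mulVec {n : Type*} [Fintype n] [DecidableEq n]
    {Q : Matrix n n ℝ} (hdet : IsUnit Q.det) (b : n → ℝ) : Q *ᵥ (Q⁻¹ *ᵥ b) = b := by
  rw [mulVec_mulVec, mul_nonsing_inv Q hdet, one_mulVec]

theorem stmt5_general (Q : Matrix (Fin 2) (Fin 2) ℝ)
    (hpos : ∀ i j, 0 < Q i j) (hdet : IsUnit Q.det) (b x : Fin 2 → ℝ)
    (hy : ∀ i, 0 ≤ (Q⁻¹ *ᵥ b) i) (hx : ∀ i, (Q⁻¹ *ᵥ b) i < x i) :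
    x ⬝ᵥ b < x ⬝ᵥ (Q *ᵥ x) := by
  set y := Q⁻¹ *ᵥ b
  have hb : b = Q *ᵥ y := (mulVec_nonsing_inv_mulVec hdet b).symm
  have hx_pos : ∀ i, 0 < x i := fun i => (hy i).trans_lt (hx i)
  have key : 0 < x ⬝ᵥ (Q *ᵥ (x - y)) :=
    dotProduct_mulVec_pos hpos hx_pos fun j => sub_pos.2 (hx j)
  rw [mulVec_sub, dotProduct_sub, ← hb] at key
  linarith

/-- The algebraic core of the ISS implication in the proof of Proposition 1: if `x`
exceeds componentwise the (nonnegative) vector `y = Q⁻¹ b`, then `⟨x, Qx⟩ > ⟨x, b⟩`. -/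
theorem stmt5 (Q : Matrix (Fin 2) (Fin 2) ℝ) (hsymm : Q.IsSymm)
    (hpos : ∀ i j, 0 < Q i j) (hdet : IsUnit Q.det) (b x : Fin 2 → ℝ)
    (hy : ∀ i, 0 ≤ (Q⁻¹ *ᵥ b) i) (hx : ∀ i, (Q⁻¹ *ᵥ b) i < x i) :
    x ⬝ᵥ b < x ⬝ᵥ (Q *ᵥ x) :=
  stmt5_general Q hpos hdet b x hy hx
end

section
/- Let L > 0, let p_d ∈ ℝ³ with ‖p_d‖ = L, and let p : ℝ → ℝ³ be a curve with ‖p(t)‖ = L for all t, differentiable at t₀ with derivative v := p'(t₀), and such that p(t₀) × p_d ≠ 0. Define Δ(t) := arccos(⟨p(t), p_d⟩ / L²) and t̂(t) := (p_d − (⟨p(t), p_d⟩ / L²) p(t)) / (L · sin Δ(t)). Then t ↦ t̂(t) is differentiable at t₀ with derivative t̂'(t₀) = −(⟨v, p_d⟩ / L²) · p(t₀) / (L · sin Δ(t₀)) − (cos Δ(t₀) / (L · sin Δ(t₀))) · (v − ⟨v, t̂(t₀)⟩ t̂(t₀)). -/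
open Matrix

/-- The angle `Δ = arccos(⟨p, p_d⟩/L²)` between `p` and `p_d`. -/
noncomputable def angleTo (L : ℝ) (pd p : Fin 3 → ℝ) : ℝ :=
  Real.arccos (inner3 p pd / L ^ 2)

/-- The geodesic unit tangent vector `t̂ = (p_d - (⟨p,p_d⟩/L²) p)/(L sin Δ)`. -/
noncomputable def geoTangent (L : ℝ) (pd p : Fin 3 → ℝ) : Fin 3 → ℝ :=
  (L * Real.sin (angleTo L pd p))⁻¹ • (pd - (inner3 p pd / L ^ 2) • p)

theorem dotProduct_self_eq_sq_of_norm3_eq {v : Fin 3 → ℝ} {L : ℝ} (h : norm3 v = L) :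
    v ⬝ᵥ v = L ^ 2 := by
  rw [← h, norm3, Real.sq_sqrt (Finset.sum_nonneg fun i _ => sq_nonneg (v i))]
  simp only [dotProduct, sq]

theorem HasDerivAt.dotProduct {n : Type*} [Fintype n] {p q : ℝ → n → ℝ} {v w : n → ℝ} {t : ℝ}
    (hp : HasDerivAt p v t) (hq : HasDerivAt q w t) :
    HasDerivAt (fun s => p s ⬝ᵥ q s) (v ⬝ᵥ q t + p t ⬝ᵥ w) t := by
  simp only [_root_.dotProduct, ← Finset.sum_add_distrib]
  exact HasDerivAt.fun_sum fun i _ =>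
    (hasDerivAt_pi.mp hp i).mul (hasDerivAt_pi.mp hq i)

theorem dotProduct_eq_zero_of_hasDerivAt_of_dotProduct_self_const {n : Type*} [Fintype n]
    {p : ℝ → n → ℝ} {v : n → ℝ} {t₀ c : ℝ} (hp : ∀ t, p t ⬝ᵥ p t = c)
    (hv : HasDerivAt p v t₀) : v ⬝ᵥ p t₀ = 0 := by
  have hderiv := hv.dotProduct hv
  simp only [hp] at hderiv
  have := hderiv.unique (hasDerivAt_const t₀ c)
  rw [dotProduct_comm (p t₀) v] at this
  linarith

theorem sq_dotProduct_lt_of_cross_ne_zero {a b : Fin 3 → ℝ} (h : a ⨯₃ b ≠ 0) :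
    (a ⬝ᵥ b) ^ 2 < (a ⬝ᵥ a) * (b ⬝ᵥ b) := by
  have hpos : 0 < a ⨯₃ b ⬝ᵥ a ⨯₃ b :=
    lt_of_le_of_ne (Finset.sum_nonneg fun i _ => mul_self_nonneg _)
      (Ne.symm (dotProduct_self_eq_zero.not.mpr h))
  rw [cross_dot_cross, dotProduct_comm b a] at hpos
  linarith

theorem abs_dotProduct_div_lt_one_of_cross_ne_zero {L : ℝ} {a b : Fin 3 → ℝ} (hL : L ≠ 0)
    (ha : a ⬝ᵥ a = L ^ 2) (hb : b ⬝ᵥ b = L ^ 2) (h : a ⨯₃ b ≠ 0) :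
    |a ⬝ᵥ b / L ^ 2| < 1 := by
  have := sq_dotProduct_lt_of_cross_ne_zero h
  rw [ha, hb] at this
  rw [← sq_lt_one_iff_abs_lt_one, div_pow, div_lt_one (by positivity)]
  linarith

theorem HasDerivAt.sin_arccos {u : ℝ → ℝ} {u' t : ℝ} (hu : HasDerivAt u u' t)
    (h : |u t| < 1) :
    HasDerivAt (fun s => Real.sin (Real.arccos (u s)))
      (-(Real.cos (Real.arccos (u t)) * u') / Real.sin (Real.arccos (u t))) t := by
  obtain ⟨hl, hr⟩ := abs_lt.mp h
  rw [Real.sin_arccos]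
  exact ((Real.hasDerivAt_arccos hl.ne' hr.ne).comp t hu).sin.congr_deriv
    (by simp only [Function.comp_apply]; ring)

theorem inner3_geoTangent_of_inner3_eq_zero {L : ℝ} {pd p v : Fin 3 → ℝ}
    (h : inner3 v p = 0) :
    inner3 v (geoTangent L pd p) = (L * Real.sin (angleTo L pd p))⁻¹ * inner3 v pd := by
  rw [inner3_eq_dotProduct] at h
  simp only [geoTangent, inner3_eq_dotProduct, dotProduct_smul, dotProduct_sub, h,
    smul_eq_mul, mul_zero, sub_zero]

/-- Derivative of the geodesic unit tangent vector `t̂` along a curve on the sphere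
of radius `L` (eq. ddttexplicit in the paper):
`t̂' = -(⟨v, p_d⟩/L²) p/(L sin Δ) - (cos Δ/(L sin Δ))(v - ⟨v, t̂⟩ t̂)`. -/
theorem stmt10 (L : ℝ) (hL : 0 < L) (pd : Fin 3 → ℝ) (hpd : norm3 pd = L)
    (p : ℝ → Fin 3 → ℝ) (hp : ∀ t, norm3 (p t) = L) (t₀ : ℝ) (v : Fin 3 → ℝ)
    (hv : HasDerivAt p v t₀) (hc : crossProduct (p t₀) pd ≠ 0) :
    HasDerivAt (fun t => geoTangent L pd (p t))
      (-((inner3 v pd / L ^ 2) * (L * Real.sin (angleTo L pd (p t₀)))⁻¹) • p t₀ -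
        (Real.cos (angleTo L pd (p t₀)) / (L * Real.sin (angleTo L pd (p t₀)))) •
          (v - inner3 v (geoTangent L pd (p t₀)) • geoTangent L pd (p t₀))) t₀ := by
  have hpp (t : ℝ) : p t ⬝ᵥ p t = L ^ 2 := dotProduct_self_eq_sq_of_norm3_eq (hp t)
  have horth : inner3 v (p t₀) = 0 :=
    dotProduct_eq_zero_of_hasDerivAt_of_dotProduct_self_const hpp hv
  have hu_abs : |inner3 (p t₀) pd / L ^ 2| < 1 :=
    abs_dotProduct_div_lt_one_of_cross_ne_zero hL.ne' (hpp t₀) (dotProduct_self_eq_sq_of_norm3_eq hpd) hc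
  obtain ⟨hu_gt, hu_lt⟩ := abs_lt.mp hu_abs
  have hcos : Real.cos (angleTo L pd (p t₀)) = inner3 (p t₀) pd / L ^ 2 :=
    Real.cos_arccos hu_gt.le hu_lt.le
  have hsin : 0 < Real.sin (angleTo L pd (p t₀)) :=
    Real.sin_pos_of_pos_of_lt_pi (Real.arccos_pos.mpr hu_lt) (Real.arccos_lt_pi.mpr hu_gt)
  have hu : HasDerivAt (fun t => inner3 (p t) pd / L ^ 2) (inner3 v pd / L ^ 2) t₀ := by
    have := (hv.dotProduct (hasDerivAt_const t₀ pd)).div_const (L ^ 2)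
    rwa [dotProduct_zero, add_zero] at this
  have hsin_deriv : HasDerivAt (fun t => Real.sin (angleTo L pd (p t)))
      (-(Real.cos (angleTo L pd (p t₀)) * (inner3 v pd / L ^ 2)) /
        Real.sin (angleTo L pd (p t₀))) t₀ :=
    hu.sin_arccos hu_abs
  have hscale := (hsin_deriv.const_mul L).inv (by positivity)
  have hdir := (hu.smul hv).const_sub pd
  refine (hscale.smul hdir).congr_deriv ?_
  rw [inner3_geoTangent_of_inner3_eq_zero horth]
  simp only [geoTangent, Pi.inv_apply, Pi.smul_apply', hcos]
  match_scalars <;> field_simp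
  ring
end

section
/- Let L > 0, let p_d ∈ ℝ³ with ‖p_d‖ = L, and let p : ℝ → ℝ³ be a curve with ‖p(t)‖ = L for all t, differentiable at t₀ with derivative v := p'(t₀), and such that p(t₀) × p_d ≠ 0. Define Δ := arccos(⟨p(t₀), p_d⟩ / L²), t̂ := (p_d − (⟨p(t₀), p_d⟩ / L²) p(t₀)) / (L sin Δ), and let w := −(⟨v, p_d⟩ / L²) · p(t₀) / (L sin Δ) − (cos Δ / (L sin Δ)) · (v − ⟨v, t̂⟩ t̂). If moreover Δ < π/2, then L Δ · ⟨v, w⟩ ≥ −‖v‖². -/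
open Matrix

/-- The derivative of `t̂` along the curve:
`w = -(⟨v, p_d⟩/L²) p/(L sin Δ) - (cos Δ/(L sin Δ))(v - ⟨v, t̂⟩ t̂)`. -/
noncomputable def geoTangentDeriv (L : ℝ) (pd p v : Fin 3 → ℝ) : Fin 3 → ℝ :=
  -((inner3 v pd / L ^ 2) * (L * Real.sin (angleTo L pd p))⁻¹) • p -
    (Real.cos (angleTo L pd p) / (L * Real.sin (angleTo L pd p))) •
      (v - inner3 v (geoTangent L pd p) • geoTangent L pd p)

/-!
Since `p` stays on the sphere, `v ⟂ p(t₀)`, so the `p(t₀)`-component of `w` does not contribute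
and `⟨v, w⟩ = -(cos Δ / (L sin Δ)) (‖v‖² - ⟨v, t̂⟩²)`. Hence
`L Δ ⟨v, w⟩ = -k ‖v‖² + k ⟨v, t̂⟩² ≥ -k ‖v‖² ≥ -‖v‖²` with `k = Δ cos Δ / sin Δ ∈ [0, 1]`,
the bound `k ≤ 1` being `Δ ≤ tan Δ` on `[0, π/2)`. At `Δ = 0` both sides of the identity vanish,
division by `sin 0 = 0` giving `0`.
-/

lemma inner3_self_nonneg (v : Fin 3 → ℝ) : 0 ≤ inner3 v v :=
  Finset.sum_nonneg fun i _ => mul_self_nonneg (v i)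

lemma norm3_sq (v : Fin 3 → ℝ) : norm3 v ^ 2 = inner3 v v := by
  rw [norm3, Real.sq_sqrt (Finset.sum_nonneg fun i _ => sq_nonneg (v i))]
  simp only [inner3, sq]

lemma inner3_sub_right (v w x : Fin 3 → ℝ) :
    inner3 v (w - x) = inner3 v w - inner3 v x := by
  simp only [inner3, Pi.sub_apply, mul_sub, Finset.sum_sub_distrib]

lemma inner3_smul_right (c : ℝ) (v w : Fin 3 → ℝ) :
    inner3 v (c • w) = c * inner3 v w := by
  simp only [inner3, Pi.smul_apply, smul_eq_mul, Finset.mul_sum]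
  exact Finset.sum_congr rfl fun i _ => by ring

lemma HasDerivAt.inner3_self {p : ℝ → Fin 3 → ℝ} {v : Fin 3 → ℝ} {t₀ : ℝ}
    (hv : HasDerivAt p v t₀) :
    HasDerivAt (fun t => inner3 (p t) (p t)) (2 * inner3 v (p t₀)) t₀ := by
  have hcomp := hasDerivAt_pi.mp hv
  have hsum : HasDerivAt (fun t => inner3 (p t) (p t))
      (∑ i, (v i * p t₀ i + p t₀ i * v i)) t₀ :=
    HasDerivAt.fun_sum fun i _ => (hcomp i).fun_mul (hcomp i)
  refine hsum.congr_deriv ?_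
  rw [inner3, Finset.mul_sum]
  exact Finset.sum_congr rfl fun i _ => by ring

lemma inner3_deriv_self_eq_zero_of_norm3_const {p : ℝ → Fin 3 → ℝ} {v : Fin 3 → ℝ}
    {t₀ L : ℝ} (hp : ∀ t, norm3 (p t) = L) (hv : HasDerivAt p v t₀) :
    inner3 v (p t₀) = 0 := by
  have hconst : (fun t => inner3 (p t) (p t)) = fun _ => L ^ 2 := by
    funext t
    rw [← norm3_sq, hp]
  have h := hv.inner3_self.unique (hconst ▸ hasDerivAt_const t₀ (L ^ 2))
  linarith

lemma inner3_geoTangentDeriv {L : ℝ} {pd q v : Fin 3 → ℝ} (hvq : inner3 v q = 0) :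
    inner3 v (geoTangentDeriv L pd q v) =
      -(Real.cos (angleTo L pd q) / (L * Real.sin (angleTo L pd q))) *
        (inner3 v v - inner3 v (geoTangent L pd q) ^ 2) := by
  simp only [geoTangentDeriv, inner3_sub_right, inner3_smul_right, hvq]
  ring

namespace Real

lemma mul_cos_le_sin {x : ℝ} (h0 : 0 ≤ x) (hx : x < π / 2) : x * cos x ≤ sin x := by
  have hcos : 0 < cos x := cos_pos_of_mem_Ioo ⟨by linarith [pi_pos], hx⟩
  have htan := le_tan h0 hx
  rwa [tan_eq_sin_div_cos, le_div_iff₀ hcos] at htan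

lemma mul_cos_div_sin_mem_Icc {x : ℝ} (h0 : 0 ≤ x) (hx : x < π / 2) :
    x * cos x / sin x ∈ Set.Icc 0 1 := by
  have hcos : 0 ≤ cos x := cos_nonneg_of_mem_Icc ⟨by linarith [pi_pos], hx.le⟩
  have hsin : 0 ≤ sin x := sin_nonneg_of_nonneg_of_le_pi h0 (by linarith [pi_pos])
  exact ⟨by positivity, div_le_one_of_le₀ (mul_cos_le_sin h0 hx) hsin⟩

end Real

lemma neg_le_neg_mul_sub_sq {k V : ℝ} (hk : k ∈ Set.Icc 0 1) (hV : 0 ≤ V) (a : ℝ) :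
    -V ≤ -k * (V - a ^ 2) := by
  nlinarith [hk.1, hk.2, sq_nonneg a]

theorem stmt12_general (L : ℝ) (hL : 0 < L) (pd : Fin 3 → ℝ)
    (p : ℝ → Fin 3 → ℝ) (hp : ∀ t, norm3 (p t) = L) (t₀ : ℝ) (v : Fin 3 → ℝ)
    (hv : HasDerivAt p v t₀)
    (hΔ : angleTo L pd (p t₀) < Real.pi / 2) :
    -(norm3 v ^ 2) ≤
      L * angleTo L pd (p t₀) * inner3 v (geoTangentDeriv L pd (p t₀) v) := by
  have hvq := inner3_deriv_self_eq_zero_of_norm3_const hp hv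
  have hk := Real.mul_cos_div_sin_mem_Icc (Real.arccos_nonneg _) hΔ
  calc -(norm3 v ^ 2)
      ≤ -(angleTo L pd (p t₀) * Real.cos (angleTo L pd (p t₀)) /
            Real.sin (angleTo L pd (p t₀))) * (inner3 v v - inner3 v (geoTangent L pd (p t₀)) ^ 2) := by
        rw [norm3_sq]
        exact neg_le_neg_mul_sub_sq hk (inner3_self_nonneg v) _
    _ = L * angleTo L pd (p t₀) * inner3 v (geoTangentDeriv L pd (p t₀) v) := by
        rw [inner3_geoTangentDeriv hvq]
        field_simp

/-- The lower bound `B₂ = dist(p, p_d) ⟨v, dt̂/dt⟩ ≥ -‖ṗ‖²` in the proof of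
Proposition 2, valid when the angle `Δ` is less than `π/2`. -/
theorem stmt12 (L : ℝ) (hL : 0 < L) (pd : Fin 3 → ℝ) (hpd : norm3 pd = L)
    (p : ℝ → Fin 3 → ℝ) (hp : ∀ t, norm3 (p t) = L) (t₀ : ℝ) (v : Fin 3 → ℝ)
    (hv : HasDerivAt p v t₀) (hc : crossProduct (p t₀) pd ≠ 0)
    (hΔ : angleTo L pd (p t₀) < Real.pi / 2) :
    -(norm3 v ^ 2) ≤
      L * angleTo L pd (p t₀) * inner3 v (geoTangentDeriv L pd (p t₀) v) :=
  stmt12_general L hL pd p hp t₀ v hv hΔ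
end

section
/- Let h_p, h_d > 0 be real numbers and let ε satisfy 0 < ε < 16 h_d / (32 h_p + π² h_d²). Then the 2×2 symmetric matrix Q := [[ε h_p, −ε h_d π / 4], [−ε h_d π / 4, h_d / h_p − 2 ε]] is positive definite. -/
/-!
A symmetric 2×2 matrix with positive top-left entry and positive determinant is positive
definite (complete the square in the quadratic form). Here `det Q = ε (16 h_d - ε (32 h_p + π² h_d²)) / 16`,
whose second factor is positive exactly by the bound on `ε`.
-/

open Matrix Real

section TwoByTwo

variable {K : Type*} [Field K] [LinearOrder K] [IsStrictOrderedRing K]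

theorem quadratic_pos_of_pos_of_det_pos {a b c : K} (ha : 0 < a) (hdet : 0 < a * c - b ^ 2)
    {x y : K} (hxy : x ≠ 0 ∨ y ≠ 0) : 0 < a * x ^ 2 + 2 * b * x * y + c * y ^ 2 := by
  have hsq : a * (a * x ^ 2 + 2 * b * x * y + c * y ^ 2)
      = (a * x + b * y) ^ 2 + (a * c - b ^ 2) * y ^ 2 := by ring
  refine pos_of_mul_pos_right (hsq ▸ ?_) ha.le
  rcases eq_or_ne y 0 with rfl | hy
  · have hx : x ≠ 0 := hxy.resolve_right (not_not.mpr rfl)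
    simpa using sq_pos_of_ne_zero (mul_ne_zero ha.ne' hx)
  · exact add_pos_of_nonneg_of_pos (sq_nonneg _) (mul_pos hdet (sq_pos_of_ne_zero hy))

variable [StarRing K] [TrivialStar K]

theorem Matrix.posDef_fin_two_of_pos_of_det_pos {a b c : K} (ha : 0 < a)
    (hdet : 0 < a * c - b ^ 2) : (!![a, b; b, c]).PosDef := by
  rw [posDef_iff_dotProduct_mulVec]
  refine ⟨?_, fun x hx => ?_⟩
  · ext i j
    fin_cases i <;> fin_cases j <;> simp
  · have hxy : x 0 ≠ 0 ∨ x 1 ≠ 0 := by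
      by_contra! h
      exact hx (funext fun i => by fin_cases i <;> simp [h.1, h.2])
    convert quadratic_pos_of_pos_of_det_pos ha hdet hxy using 1
    simp only [dotProduct, Pi.star_apply, star_trivial, mulVec, of_apply, cons_val',
      cons_val_fin_one, Fin.sum_univ_two, cons_val_zero, cons_val_one]
    ring

end TwoByTwo

theorem stmt13_general (hp hd ε : ℝ) (hhp : 0 < hp)
    (hε0 : 0 < ε) (hε : ε < 16 * hd / (32 * hp + π ^ 2 * hd ^ 2)) :
    (!![ε * hp, -ε * hd * π / 4; -ε * hd * π / 4, hd / hp - 2 * ε]).PosDef := by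
  have hden : 0 < 32 * hp + π ^ 2 * hd ^ 2 := by positivity
  have hmargin : 0 < 16 * hd - ε * (32 * hp + π ^ 2 * hd ^ 2) := by
    linarith [(lt_div_iff₀ hden).mp hε]
  have hdet : ε * hp * (hd / hp - 2 * ε) - (-ε * hd * π / 4) ^ 2
      = ε * (16 * hd - ε * (32 * hp + π ^ 2 * hd ^ 2)) / 16 := by
    field_simp
    ring
  exact posDef_fin_two_of_pos_of_det_pos (by positivity) (hdet ▸ by positivity)

/-- Positive definiteness of the matrix `Q` appearing in the Lyapunov derivative
estimate of the outer position loop (Proposition 2). -/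
theorem stmt13 (hp hd ε : ℝ) (hhp : 0 < hp) (hhd : 0 < hd)
    (hε0 : 0 < ε) (hε : ε < 16 * hd / (32 * hp + π ^ 2 * hd ^ 2)) :
    (!![ε * hp, -ε * hd * π / 4; -ε * hd * π / 4, hd / hp - 2 * ε]).PosDef :=
  stmt13_general hp hd ε hhp hε0 hε
end
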